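/- The semigroup T_{S(I)}(X,P) is an inverse semigroup if and only if (i) S(I) is an inverse semigroup, and (ii) for each idempotent α ∈ E(S(I)), every block X_i with i in the image of α is a singleton. -/

import Mathlib

open Function Set

/-- `c : I → I` is the character of `f` w.r.t. the partition of `X` whose blocks are
the fibers of `idx : X → I`: the block `X_i = idx⁻¹{i}` is mapped by `f` into `X_{c i}`. -/
def IsChar {X I : Type*} (idx : X → I) (f : X → X) (c : I → I) : Prop :=
  ∀ x, c (idx x) = idx (f x)

/-- `f` preserves the partition, i.e. `f ∈ T(X,P)`. -/
def PresP {X I : Type*} (idx : X → I) (f : X → X) : Prop :=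
  ∃ c, IsChar idx f c

/-- `f ∈ T_{S(I)}(X,P)`: the character of `f` lies in `S`. -/
def InTS {X I : Type*} (idx : X → I) (S : Set (I → I)) (f : X → X) : Prop :=
  ∃ c ∈ S, IsChar idx f c

/-- `α` is a unit of the (sub)monoid `S` of `T(I)`. -/
def IsUnitS {I : Type*} (S : Set (I → I)) (α : I → I) : Prop :=
  α ∈ S ∧ ∃ β ∈ S, (∀ i, β (α i) = i) ∧ (∀ i, α (β i) = i)

/-- `u` is a unit of the monoid `T_{S(I)}(X,P)`. -/
def IsUnitTS {X I : Type*} (idx : X → I) (S : Set (I → I)) (u : X → X) : Prop :=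
  InTS idx S u ∧ ∃ v, InTS idx S v ∧ (∀ x, v (u x) = x) ∧ (∀ x, u (v x) = x)

/-! Inverses of maps in `T_{S(I)}(X,P)` descend to inverses of their characters, and inverses of
characters lift back along any sections `r` of the partition as `x ↦ r (α (idx x))`. So uniqueness
of inverses upstairs gives it in `S(I)`, and lifting an idempotent `α` along two sections that
disagree on a block of `range α` gives two inverses of the same idempotent map unless that block is
a singleton. Conversely, if `c, d` are mutually inverse in `S(I)`, the blocks over `range c` and
`range d` lie in the ranges of the idempotents `c d` and `d c`, hence are singletons; on them a map
is determined by its character, so inverses upstairs are those of `S(I)`. -/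

def IsSemigroupInverse {α : Type*} (f g : α → α) : Prop :=
  (∀ x, f (g (f x)) = f x) ∧ ∀ x, g (f (g x)) = g x

def HasUniqueInverses {α : Type*} (T : Set (α → α)) : Prop :=
  ∀ f ∈ T, ∃! g, g ∈ T ∧ IsSemigroupInverse f g

theorem IsSemigroupInverse.symm {α : Type*} {f g : α → α} (h : IsSemigroupInverse f g) :
    IsSemigroupInverse g f :=
  ⟨h.2, h.1⟩

theorem isSemigroupInverse_self_of_idem {α : Type*} {f : α → α} (hf : ∀ x, f (f x) = f x) :
    IsSemigroupInverse f f :=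
  ⟨fun x => by rw [hf, hf], fun x => by rw [hf, hf]⟩

section Partition

variable {X I : Type*} {idx : X → I}

theorem IsChar.unique (hsurj : Surjective idx) {f : X → X} {c c' : I → I}
    (hc : IsChar idx f c) (hc' : IsChar idx f c') : c = c' :=
  funext fun i => by
    obtain ⟨x, rfl⟩ := hsurj i
    rw [hc, hc']

theorem IsChar.eq_of_subsingleton {f g : X → X} {c : I → I} (hf : IsChar idx f c)
    (hg : IsChar idx g c) (hblocks : ∀ i, (idx ⁻¹' {c i}).Subsingleton) : f = g :=
  funext fun x => hblocks (idx x) (hf x).symm (hg x).symm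

theorem IsSemigroupInverse.of_isChar (hsurj : Surjective idx) {f g : X → X} {c d : I → I}
    (hf : IsChar idx f c) (hg : IsChar idx g d) (h : IsSemigroupInverse f g) :
    IsSemigroupInverse c d := by
  constructor <;> intro i <;> obtain ⟨x, rfl⟩ := hsurj i
  · rw [hf x, hg (f x), hf (g (f x)), h.1]
  · rw [hg x, hf (g x), hg (f (g x)), h.2]

theorem IsSemigroupInverse.of_isChar_of_subsingleton {f g : X → X} {c d : I → I}
    (hf : IsChar idx f c) (hg : IsChar idx g d) (h : IsSemigroupInverse c d)
    (hc : ∀ i, (idx ⁻¹' {c i}).Subsingleton) (hd : ∀ i, (idx ⁻¹' {d i}).Subsingleton) :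
    IsSemigroupInverse f g := by
  constructor <;> intro x
  · refine hc (idx x) ?_ (hf x).symm
    change idx (f (g (f x))) = c (idx x)
    rw [← hf (g (f x)), ← hg (f x), ← hf x, h.1]
  · refine hd (idx x) ?_ (hg x).symm
    change idx (g (f (g x))) = d (idx x)
    rw [← hg (f (g x)), ← hf (g x), ← hg x, h.2]

def blockLift (idx : X → I) (r : I → X) (α : I → I) : X → X :=
  fun x => r (α (idx x))

variable {S : Set (I → I)} {r r' : I → X}

theorem isChar_blockLift (hr : ∀ i, idx (r i) = i) (α : I → I) :
    IsChar idx (blockLift idx r α) α :=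
  fun _ => (hr _).symm

theorem inTS_blockLift (hr : ∀ i, idx (r i) = i) {α : I → I} (hα : α ∈ S) :
    InTS idx S (blockLift idx r α) :=
  ⟨α, hα, isChar_blockLift hr α⟩

theorem isSemigroupInverse_blockLift (hr : ∀ i, idx (r i) = i) (hr' : ∀ i, idx (r' i) = i)
    {α β : I → I} (h : IsSemigroupInverse α β) :
    IsSemigroupInverse (blockLift idx r α) (blockLift idx r' β) := by
  constructor <;> intro <;> simp only [blockLift, hr, hr', h.1, h.2]

theorem exists_section_apply_eq (hsurj : Surjective idx) {a : X} {j : I} (ha : idx a = j) :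
    ∃ r : I → X, (∀ i, idx (r i) = i) ∧ r j = a := by
  classical
  refine ⟨update (surjInv hsurj) j a, fun i => ?_, update_self ..⟩
  rcases eq_or_ne i j with rfl | hij
  · rw [update_self, ha]
  · rw [update_of_ne hij, surjInv_eq hsurj]

theorem subsingleton_preimage_of_isSemigroupInverse
    (hblocks : ∀ α ∈ S, (∀ i, α (α i) = α i) → ∀ i ∈ range α, (idx ⁻¹' {i}).Subsingleton)
    (hS : ∀ α ∈ S, ∀ β ∈ S, (fun i => β (α i)) ∈ S) {α β : I → I} (hα : α ∈ S) (hβ : β ∈ S)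
    (h : IsSemigroupInverse α β) (i : I) : (idx ⁻¹' {α i}).Subsingleton :=
  hblocks _ (hS β hβ α hα) (fun j => h.1 (β j)) (α i) ⟨α i, h.1 i⟩

theorem HasUniqueInverses.of_inTS (hsurj : Surjective idx)
    (h : HasUniqueInverses {f | InTS idx S f}) : HasUniqueInverses S := by
  intro α hα
  obtain ⟨r, hr⟩ := hsurj.hasRightInverse
  obtain ⟨g, ⟨⟨β, hβ, hg⟩, hinv⟩, huniq⟩ := h _ (inTS_blockLift hr hα)
  refine ⟨β, ⟨hβ, hinv.of_isChar hsurj (isChar_blockLift hr α) hg⟩, ?_⟩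
  rintro β' ⟨hβ', h'⟩
  have hlift : blockLift idx r β' = g :=
    huniq _ ⟨inTS_blockLift hr hβ', isSemigroupInverse_blockLift hr hr h'⟩
  exact (hlift ▸ isChar_blockLift hr β').unique hsurj hg

theorem subsingleton_preimage_of_inTS (hsurj : Surjective idx)
    (h : HasUniqueInverses {f | InTS idx S f}) {α : I → I} (hα : α ∈ S)
    (hidem : ∀ i, α (α i) = α i) : ∀ i ∈ range α, (idx ⁻¹' {i}).Subsingleton := by
  rintro _ ⟨i, rfl⟩ a ha b hb
  obtain ⟨ra, hra, rfl⟩ := exists_section_apply_eq hsurj ha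
  obtain ⟨rb, hrb, rfl⟩ := exists_section_apply_eq hsurj hb
  obtain ⟨x, rfl⟩ := hsurj i
  have hα' : IsSemigroupInverse α α := isSemigroupInverse_self_of_idem hidem
  have hlifts : blockLift idx ra α = blockLift idx rb α :=
    (h _ (inTS_blockLift hra hα)).unique
      ⟨inTS_blockLift hra hα, isSemigroupInverse_blockLift hra hra hα'⟩
      ⟨inTS_blockLift hrb hα, isSemigroupInverse_blockLift hra hrb hα'⟩
  exact congrFun hlifts x

theorem HasUniqueInverses.inTS (hsurj : Surjective idx)
    (hS : ∀ α ∈ S, ∀ β ∈ S, (fun i => β (α i)) ∈ S) (hinv : HasUniqueInverses S)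
    (hblocks : ∀ α ∈ S, (∀ i, α (α i) = α i) → ∀ i ∈ range α, (idx ⁻¹' {i}).Subsingleton) :
    HasUniqueInverses {f | InTS idx S f} := by
  rintro f ⟨c, hc, hf⟩
  obtain ⟨d, ⟨hd, hcd⟩, hduniq⟩ := hinv c hc
  obtain ⟨r, hr⟩ := hsurj.hasRightInverse
  have hblocks_c := subsingleton_preimage_of_isSemigroupInverse hblocks hS hc hd hcd
  have hblocks_d := subsingleton_preimage_of_isSemigroupInverse hblocks hS hd hc hcd.symm
  refine ⟨blockLift idx r d, ⟨inTS_blockLift hr hd,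
    hcd.of_isChar_of_subsingleton hf (isChar_blockLift hr d) hblocks_c hblocks_d⟩, ?_⟩
  rintro g ⟨⟨d', hd', hg⟩, hfg⟩
  obtain rfl : d' = d := hduniq d' ⟨hd', hfg.of_isChar hsurj hf hg⟩
  exact hg.eq_of_subsingleton (isChar_blockLift hr d') hblocks_d

end Partition

theorem inverse_semigroup_iff {X I : Type*} (idx : X → I)
    (hsurj : Function.Surjective idx) (S : Set (I → I))
    (hS : ∀ α ∈ S, ∀ β ∈ S, (fun i => β (α i)) ∈ S) :
    (∀ f, InTS idx S f →
        ∃ g, (InTS idx S g ∧ (∀ x, f (g (f x)) = f x) ∧ (∀ x, g (f (g x)) = g x)) ∧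
          ∀ g', (InTS idx S g' ∧ (∀ x, f (g' (f x)) = f x) ∧ (∀ x, g' (f (g' x)) = g' x)) →
            g' = g) ↔
      ((∀ α ∈ S,
          ∃ β, (β ∈ S ∧ (∀ i, α (β (α i)) = α i) ∧ (∀ i, β (α (β i)) = β i)) ∧
            ∀ β', (β' ∈ S ∧ (∀ i, α (β' (α i)) = α i) ∧ (∀ i, β' (α (β' i)) = β' i)) →
              β' = β) ∧
       (∀ α ∈ S, (∀ i, α (α i) = α i) →
          ∀ i ∈ Set.range α, (idx ⁻¹' {i}).Subsingleton)) := by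
  constructor
  · intro h
    exact ⟨HasUniqueInverses.of_inTS hsurj h,
      fun α hα hidem => subsingleton_preimage_of_inTS hsurj h hα hidem⟩
  · rintro ⟨hinv, hblocks⟩
    exact HasUniqueInverses.inTS hsurj hS hinv hblocks
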